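/- Let θ ∈ (0, π/2) and let u be a model eigenfunction of H(θ) with eigenvalue σ. Then the Virial identities hold: ∫_{ℝ²₊} (|∂_s u|² + |∂_t u|²) ds dt = ∫_{ℝ²₊} V_θ² u² ds dt = σ/2. -/

import Mathlib

/-!
Both identities come from integrating a divergence over the half-plane. Multiplying the
eigenvalue equation by `u` gives `div (u ∇u) = |∇u|² + V_θ² u² - σ u²`; multiplying it by
the dilation generator `s ∂_s u + t ∂_t u` gives the Rellich–Pohozaev flux
`(virialFlux₁, virialFlux₂)`, whose divergence is `2 V_θ² u² - σ u²` because `V_θ` is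
homogeneous of degree one. The Neumann condition kills both fluxes on `t = 0` and rapid decay
kills them at infinity, so `∫ |∇u|² + ∫ V_θ² u² = σ = 2 ∫ V_θ² u²` once `∫ u² = 1`.
-/

open Real MeasureTheory Set

noncomputable section

/-- Partial derivative with respect to the first variable. -/
def pd1 (u : ℝ → ℝ → ℝ) : ℝ → ℝ → ℝ := fun s t => deriv (fun x => u x t) s

/-- Partial derivative with respect to the second variable. -/
def pd2 (u : ℝ → ℝ → ℝ) : ℝ → ℝ → ℝ := fun s t => deriv (fun y => u s y) t

/-- The potential `V_θ(s,t) = t cos θ − s sin θ`. -/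
def Vpot (θ : ℝ) : ℝ → ℝ → ℝ := fun s t => t * Real.cos θ - s * Real.sin θ

/-- The operator `H(θ) = −∂_s² − ∂_t² + V_θ²` applied to `u`. -/
def Hop (θ : ℝ) (u : ℝ → ℝ → ℝ) : ℝ → ℝ → ℝ :=
  fun s t => - pd1 (pd1 u) s t - pd2 (pd2 u) s t + (Vpot θ s t)^2 * u s t

/-- Integral over the half-plane `{t > 0}` with respect to `ds dt`. -/
def intHalf (f : ℝ → ℝ → ℝ) : ℝ := ∫ s : ℝ, ∫ t in Set.Ioi (0:ℝ), f s t

/-- Schwartz-class on the closed half-plane: all iterated partial derivatives decay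
faster than any power of `|s| + t`. -/
def SchwartzHalf (u : ℝ → ℝ → ℝ) : Prop :=
  ∀ k l n : ℕ, ∃ C : ℝ, ∀ s t : ℝ, 0 ≤ t →
    |pd1^[k] (pd2^[l] u) s t| ≤ C * (1 + |s| + t) ^ (-(n:ℝ))

/-- A model eigenfunction of `H(θ)` with eigenvalue `σ`: smooth up to the boundary,
Schwartz-class, `L²`-normalized, Neumann boundary condition, and `H(θ)u = σu` on `{t ≥ 0}`. -/
structure IsModelEigen (θ : ℝ) (u : ℝ → ℝ → ℝ) (σ : ℝ) : Prop where
  smooth : ∀ n : ℕ, ContDiff ℝ n (fun p : ℝ × ℝ => u p.1 p.2)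
  schwartz : SchwartzHalf u
  normalized : intHalf (fun s t => (u s t)^2) = 1
  neumann : ∀ s : ℝ, pd2 u s 0 = 0
  eigen : ∀ s t : ℝ, 0 ≤ t → Hop θ u s t = σ * u s t

open Function

section PartialDerivatives

variable {u : ℝ → ℝ → ℝ}

theorem hasDerivAt_pd1 (hu : Differentiable ℝ (uncurry u)) (s t : ℝ) :
    HasDerivAt (fun x => u x t) (pd1 u s t) s :=
  (hu.differentiableAt.comp s (differentiableAt_id.prodMk (differentiableAt_const t))).hasDerivAt

theorem hasDerivAt_pd2 (hu : Differentiable ℝ (uncurry u)) (s t : ℝ) :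
    HasDerivAt (fun y => u s y) (pd2 u s t) t :=
  (hu.differentiableAt.comp t ((differentiableAt_const s).prodMk differentiableAt_id)).hasDerivAt

theorem uncurry_pd1_eq_fderiv (hu : Differentiable ℝ (uncurry u)) :
    uncurry (pd1 u) = fun p => fderiv ℝ (uncurry u) p (1, 0) := by
  ext ⟨s, t⟩
  have h := (hu (s, t)).hasFDerivAt.comp_hasDerivAt s
    ((hasDerivAt_id' s).prodMk (hasDerivAt_const s t))
  exact h.deriv

theorem uncurry_pd2_eq_fderiv (hu : Differentiable ℝ (uncurry u)) :
    uncurry (pd2 u) = fun p => fderiv ℝ (uncurry u) p (0, 1) := by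
  ext ⟨s, t⟩
  have h := (hu (s, t)).hasFDerivAt.comp_hasDerivAt t
    ((hasDerivAt_const t s).prodMk (hasDerivAt_id' t))
  exact h.deriv

theorem contDiff_uncurry_pd1 {n m : WithTop ℕ∞} (hu : ContDiff ℝ n (uncurry u))
    (hmn : m + 1 ≤ n) : ContDiff ℝ m (uncurry (pd1 u)) := by
  rw [uncurry_pd1_eq_fderiv (hu.differentiable (by rintro rfl; simp at hmn))]
  exact (hu.fderiv_right hmn).clm_apply contDiff_const

theorem contDiff_uncurry_pd2 {n m : WithTop ℕ∞} (hu : ContDiff ℝ n (uncurry u))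
    (hmn : m + 1 ≤ n) : ContDiff ℝ m (uncurry (pd2 u)) := by
  rw [uncurry_pd2_eq_fderiv (hu.differentiable (by rintro rfl; simp at hmn))]
  exact (hu.fderiv_right hmn).clm_apply contDiff_const

theorem differentiable_uncurry_pd1 (hu : ContDiff ℝ 2 (uncurry u)) :
    Differentiable ℝ (uncurry (pd1 u)) :=
  (contDiff_uncurry_pd1 (m := 1) hu (by norm_num)).differentiable one_ne_zero

theorem differentiable_uncurry_pd2 (hu : ContDiff ℝ 2 (uncurry u)) :
    Differentiable ℝ (uncurry (pd2 u)) :=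
  (contDiff_uncurry_pd2 (m := 1) hu (by norm_num)).differentiable one_ne_zero

theorem pd1_pd2_comm (hu : ContDiff ℝ 2 (uncurry u)) : pd1 (pd2 u) = pd2 (pd1 u) := by
  have hd := hu.differentiable two_ne_zero
  have hd' : Differentiable ℝ (fderiv ℝ (uncurry u)) :=
    (hu.fderiv_right (m := 1) le_rfl).differentiable one_ne_zero
  have second_deriv (v w p : ℝ × ℝ) :
      fderiv ℝ (fun q => fderiv ℝ (uncurry u) q w) p v =
        fderiv ℝ (fderiv ℝ (uncurry u)) p v w := by
    rw [fderiv_clm_apply (hd' p) (differentiableAt_const _)]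
    simp
  ext s t
  change uncurry (pd1 (pd2 u)) (s, t) = uncurry (pd2 (pd1 u)) (s, t)
  rw [uncurry_pd1_eq_fderiv (differentiable_uncurry_pd2 hu),
    uncurry_pd2_eq_fderiv (differentiable_uncurry_pd1 hu), uncurry_pd1_eq_fderiv hd,
    uncurry_pd2_eq_fderiv hd]
  simp only [second_deriv]
  exact hu.contDiffAt.isSymmSndFDerivAt (by simp) _ _

end PartialDerivatives

def RapidDecay (f : ℝ → ℝ → ℝ) : Prop :=
  ∀ n : ℕ, ∃ C, ∀ s t, 0 ≤ t → |f s t| ≤ C / (1 + |s| + t) ^ n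

namespace RapidDecay

variable {f g : ℝ → ℝ → ℝ}

theorem congr (hg : RapidDecay g) (h : ∀ s t, 0 ≤ t → f s t = g s t) : RapidDecay f := by
  intro n
  obtain ⟨C, hC⟩ := hg n
  exact ⟨C, fun s t ht => h s t ht ▸ hC s t ht⟩

theorem add (hf : RapidDecay f) (hg : RapidDecay g) : RapidDecay (fun s t => f s t + g s t) := by
  intro n
  obtain ⟨C₁, h₁⟩ := hf n
  obtain ⟨C₂, h₂⟩ := hg n
  refine ⟨C₁ + C₂, fun s t ht => ?_⟩
  rw [add_div]
  exact (abs_add_le _ _).trans (add_le_add (h₁ s t ht) (h₂ s t ht))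

theorem affine_mul (hf : RapidDecay f) (a b c : ℝ) :
    RapidDecay (fun s t => (a * s + b * t + c) * f s t) := by
  intro n
  obtain ⟨C, hC⟩ := hf (n + 1)
  refine ⟨(|a| + |b| + |c|) * C, fun s t ht => ?_⟩
  have h_affine : |a * s + b * t + c| ≤ (|a| + |b| + |c|) * (1 + |s| + t) := by
    have := abs_add_three (a * s) (b * t) c
    rw [abs_mul, abs_mul, abs_of_nonneg ht] at this
    nlinarith [abs_nonneg a, abs_nonneg b, abs_nonneg c, abs_nonneg s]
  calc |(a * s + b * t + c) * f s t|
      ≤ (|a| + |b| + |c|) * (1 + |s| + t) * (C / (1 + |s| + t) ^ (n + 1)) := by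
        rw [abs_mul]
        exact mul_le_mul h_affine (hC s t ht) (abs_nonneg _) (by positivity)
    _ = (|a| + |b| + |c|) * C / (1 + |s| + t) ^ n := by
        field_simp
        ring

theorem bounded (hf : RapidDecay f) : ∃ C, ∀ s t, 0 ≤ t → |f s t| ≤ C := by
  simpa using hf 0

theorem mul (hf : RapidDecay f) (hg : RapidDecay g) : RapidDecay (fun s t => f s t * g s t) := by
  intro n
  obtain ⟨C₁, h₁⟩ := hf.bounded
  obtain ⟨C₂, h₂⟩ := hg n
  refine ⟨C₁ * C₂, fun s t ht => ?_⟩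
  rw [abs_mul, mul_div_assoc]
  exact mul_le_mul (h₁ s t ht) (h₂ s t ht) (abs_nonneg _) ((abs_nonneg _).trans (h₁ s t ht))

theorem exists_abs_le_mul_inv_one_add_sq (hf : RapidDecay f) :
    ∃ C, ∀ s t, 0 ≤ t → |f s t| ≤ C * ((1 + s ^ 2)⁻¹ * (1 + t ^ 2)⁻¹) := by
  obtain ⟨C, hC⟩ := hf 4
  refine ⟨C, fun s t ht => (hC s t ht).trans ?_⟩
  have hC0 : 0 ≤ C := (abs_nonneg _).trans ((hC 0 0 le_rfl).trans (by norm_num))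
  have h_weight : (1 + s ^ 2) * (1 + t ^ 2) ≤ (1 + |s| + t) ^ 4 := by
    have hs : 1 + s ^ 2 ≤ (1 + |s| + t) ^ 2 := by nlinarith [abs_nonneg s, sq_abs s]
    have ht' : 1 + t ^ 2 ≤ (1 + |s| + t) ^ 2 := by nlinarith [abs_nonneg s]
    calc (1 + s ^ 2) * (1 + t ^ 2) ≤ (1 + |s| + t) ^ 2 * (1 + |s| + t) ^ 2 :=
          mul_le_mul hs ht' (by positivity) (by positivity)
      _ = (1 + |s| + t) ^ 4 := by ring
  rw [← mul_inv, ← div_eq_mul_inv]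
  exact div_le_div_of_nonneg_left hC0 (by positivity) h_weight

end RapidDecay

theorem SchwartzHalf.rapidDecay {u : ℝ → ℝ → ℝ} (hu : SchwartzHalf u) (k l : ℕ) :
    RapidDecay (pd1^[k] (pd2^[l] u)) := by
  intro n
  obtain ⟨C, hC⟩ := hu k l n
  refine ⟨C, fun s t ht => ?_⟩
  rw [div_eq_mul_inv, ← Real.rpow_natCast, ← Real.rpow_neg (by positivity)]
  exact hC s t ht

def HalfPlaneIntegrable (f : ℝ → ℝ → ℝ) : Prop :=
  Integrable (uncurry f) (volume.prod (volume.restrict (Ioi 0)))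

section HalfPlaneIntegral

variable {f g F G : ℝ → ℝ → ℝ}

theorem HalfPlaneIntegrable.add (hf : HalfPlaneIntegrable f) (hg : HalfPlaneIntegrable g) :
    HalfPlaneIntegrable (fun s t => f s t + g s t) :=
  Integrable.add hf hg

theorem HalfPlaneIntegrable.const_mul (hf : HalfPlaneIntegrable f) (c : ℝ) :
    HalfPlaneIntegrable (fun s t => c * f s t) :=
  Integrable.const_mul hf c

theorem RapidDecay.halfPlaneIntegrable (hf : RapidDecay f) (hc : Continuous (uncurry f)) :
    HalfPlaneIntegrable f := by
  obtain ⟨C, hC⟩ := hf.exists_abs_le_mul_inv_one_add_sq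
  have h_pos : ∀ᵐ p ∂((volume : Measure ℝ).prod (volume.restrict (Ioi 0))),
      p ∈ univ ×ˢ Ioi (0:ℝ) :=
    (Measure.ae_prod_mem_iff_ae_ae_mem (MeasurableSet.univ.prod measurableSet_Ioi)).2
      (ae_of_all _ fun _ => (ae_restrict_mem measurableSet_Ioi).mono fun _ ht => ⟨trivial, ht⟩)
  refine ((integrable_inv_one_add_sq.mul_prod
    integrable_inv_one_add_sq.integrableOn).const_mul C).mono' hc.aestronglyMeasurable ?_
  filter_upwards [h_pos] with p hp
  exact hC p.1 p.2 (le_of_lt hp.2)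

theorem intHalf_eq_integral (hf : HalfPlaneIntegrable f) :
    intHalf f = ∫ p, uncurry f p ∂(volume.prod (volume.restrict (Ioi 0))) :=
  (integral_prod _ hf).symm

theorem intHalf_add (hf : HalfPlaneIntegrable f) (hg : HalfPlaneIntegrable g) :
    intHalf (fun s t => f s t + g s t) = intHalf f + intHalf g := by
  rw [intHalf_eq_integral hf, intHalf_eq_integral hg, intHalf_eq_integral (hf.add hg)]
  exact integral_add hf hg

theorem intHalf_const_mul (c : ℝ) (f : ℝ → ℝ → ℝ) :
    intHalf (fun s t => c * f s t) = c * intHalf f := by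
  simp only [intHalf, integral_const_mul]

theorem intHalf_congr (h : ∀ s t, 0 < t → f s t = g s t) : intHalf f = intHalf g :=
  integral_congr_ae (ae_of_all _ fun s => setIntegral_congr_fun measurableSet_Ioi (h s))

theorem intHalf_pd1_eq_zero (hF : ∀ t, Differentiable ℝ (fun s => F s t))
    (hF_int : HalfPlaneIntegrable F) (hF₁_int : HalfPlaneIntegrable (pd1 F)) :
    intHalf (pd1 F) = 0 := by
  rw [intHalf, integral_integral_swap hF₁_int]
  refine (integral_congr_ae ?_).trans (integral_zero _ _)
  filter_upwards [hF_int.prod_left_ae, hF₁_int.prod_left_ae] with t hFt hF₁t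
  exact integral_eq_zero_of_hasDerivAt_of_integrable (fun s => (hF t s).hasDerivAt) hF₁t hFt

theorem intHalf_pd2_eq_zero (hG : ∀ s, Differentiable ℝ (fun t => G s t))
    (hG_int : HalfPlaneIntegrable G) (hG₂_int : HalfPlaneIntegrable (pd2 G))
    (hG_bdry : ∀ s, G s 0 = 0) : intHalf (pd2 G) = 0 := by
  refine (integral_congr_ae ?_).trans (integral_zero _ _)
  filter_upwards [hG_int.prod_right_ae, hG₂_int.prod_right_ae] with s hGs hG₂s
  have hderiv (t : ℝ) : HasDerivAt (fun t => G s t) (pd2 G s t) t := (hG s t).hasDerivAt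
  rw [integral_Ioi_of_hasDerivAt_of_tendsto' (fun t _ => hderiv t) hG₂s
    (tendsto_zero_of_hasDerivAt_of_integrableOn_Ioi (fun t _ => hderiv t) hG₂s hGs),
    hG_bdry, sub_zero]

end HalfPlaneIntegral

structure IsC1RapidDecay (f : ℝ → ℝ → ℝ) : Prop where
  contDiff : ContDiff ℝ 1 (uncurry f)
  decay : RapidDecay f
  decay_pd1 : RapidDecay (pd1 f)
  decay_pd2 : RapidDecay (pd2 f)

namespace IsC1RapidDecay

variable {f g : ℝ → ℝ → ℝ}

theorem differentiable (hf : IsC1RapidDecay f) : Differentiable ℝ (uncurry f) :=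
  hf.contDiff.differentiable one_ne_zero

theorem halfPlaneIntegrable (hf : IsC1RapidDecay f) : HalfPlaneIntegrable f :=
  hf.decay.halfPlaneIntegrable hf.contDiff.continuous

theorem halfPlaneIntegrable_pd1 (hf : IsC1RapidDecay f) : HalfPlaneIntegrable (pd1 f) :=
  hf.decay_pd1.halfPlaneIntegrable (contDiff_uncurry_pd1 (m := 0) hf.contDiff (by simp)).continuous

theorem halfPlaneIntegrable_pd2 (hf : IsC1RapidDecay f) : HalfPlaneIntegrable (pd2 f) :=
  hf.decay_pd2.halfPlaneIntegrable (contDiff_uncurry_pd2 (m := 0) hf.contDiff (by simp)).continuous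

theorem add (hf : IsC1RapidDecay f) (hg : IsC1RapidDecay g) :
    IsC1RapidDecay (fun s t => f s t + g s t) where
  contDiff := hf.contDiff.add hg.contDiff
  decay := hf.decay.add hg.decay
  decay_pd1 := (hf.decay_pd1.add hg.decay_pd1).congr fun s t _ =>
    ((hasDerivAt_pd1 hf.differentiable s t).fun_add (hasDerivAt_pd1 hg.differentiable s t)).deriv
  decay_pd2 := (hf.decay_pd2.add hg.decay_pd2).congr fun s t _ =>
    ((hasDerivAt_pd2 hf.differentiable s t).fun_add (hasDerivAt_pd2 hg.differentiable s t)).deriv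

theorem mul (hf : IsC1RapidDecay f) (hg : IsC1RapidDecay g) :
    IsC1RapidDecay (fun s t => f s t * g s t) where
  contDiff := hf.contDiff.mul hg.contDiff
  decay := hf.decay.mul hg.decay
  decay_pd1 := ((hf.decay_pd1.mul hg.decay).add (hf.decay.mul hg.decay_pd1)).congr fun s t _ =>
    ((hasDerivAt_pd1 hf.differentiable s t).fun_mul (hasDerivAt_pd1 hg.differentiable s t)).deriv
  decay_pd2 := ((hf.decay_pd2.mul hg.decay).add (hf.decay.mul hg.decay_pd2)).congr fun s t _ =>
    ((hasDerivAt_pd2 hf.differentiable s t).fun_mul (hasDerivAt_pd2 hg.differentiable s t)).deriv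

theorem affine_mul (hf : IsC1RapidDecay f) (a b c : ℝ) :
    IsC1RapidDecay (fun s t => (a * s + b * t + c) * f s t) where
  contDiff := by
    have : ContDiff ℝ 1 (fun p : ℝ × ℝ => a * p.1 + b * p.2 + c) := by fun_prop
    exact this.mul hf.contDiff
  decay := hf.decay.affine_mul a b c
  decay_pd1 := ((hf.decay.affine_mul 0 0 a).add (hf.decay_pd1.affine_mul a b c)).congr
    fun s t _ => (((((hasDerivAt_id' s).const_mul a).add_const (b * t)).add_const c).fun_mul
      (hasDerivAt_pd1 hf.differentiable s t) |>.congr_deriv (by ring)).deriv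
  decay_pd2 := ((hf.decay.affine_mul 0 0 b).add (hf.decay_pd2.affine_mul a b c)).congr
    fun s t _ => (((((hasDerivAt_id' t).const_mul b).const_add (a * s)).add_const c).fun_mul
      (hasDerivAt_pd2 hf.differentiable s t) |>.congr_deriv (by ring)).deriv

end IsC1RapidDecay

section DivergenceIdentities

variable {u : ℝ → ℝ → ℝ}

theorem pd1_add_pd2_energyFlux (hu : ContDiff ℝ 2 (uncurry u)) (s t : ℝ) :
    pd1 (fun s t => u s t * pd1 u s t) s t + pd2 (fun s t => u s t * pd2 u s t) s t =
      (pd1 u s t) ^ 2 + (pd2 u s t) ^ 2 + u s t * (pd1 (pd1 u) s t + pd2 (pd2 u) s t) := by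
  have hd := hu.differentiable two_ne_zero
  have h₁ : pd1 (fun s t => u s t * pd1 u s t) s t = _ :=
    ((hasDerivAt_pd1 hd s t).fun_mul (hasDerivAt_pd1 (differentiable_uncurry_pd1 hu) s t)).deriv
  have h₂ : pd2 (fun s t => u s t * pd2 u s t) s t = _ :=
    ((hasDerivAt_pd2 hd s t).fun_mul (hasDerivAt_pd2 (differentiable_uncurry_pd2 hu) s t)).deriv
  rw [h₁, h₂]
  ring

def virialFlux₁ (θ σ : ℝ) (u : ℝ → ℝ → ℝ) (s t : ℝ) : ℝ :=
  s * ((pd2 u s t) ^ 2 - (pd1 u s t) ^ 2 + (Vpot θ s t) ^ 2 * (u s t) ^ 2 - σ * (u s t) ^ 2) / 2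
    - t * pd1 u s t * pd2 u s t

def virialFlux₂ (θ σ : ℝ) (u : ℝ → ℝ → ℝ) (s t : ℝ) : ℝ :=
  t * ((pd1 u s t) ^ 2 - (pd2 u s t) ^ 2 + (Vpot θ s t) ^ 2 * (u s t) ^ 2 - σ * (u s t) ^ 2) / 2
    - s * pd1 u s t * pd2 u s t

theorem pd1_virialFlux₁_add_pd2_virialFlux₂ (θ σ : ℝ) (hu : ContDiff ℝ 2 (uncurry u))
    (s t : ℝ) :
    pd1 (virialFlux₁ θ σ u) s t + pd2 (virialFlux₂ θ σ u) s t =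
      (s * pd1 u s t + t * pd2 u s t) * (Hop θ u s t - σ * u s t)
        + 2 * (Vpot θ s t) ^ 2 * (u s t) ^ 2 - σ * (u s t) ^ 2 := by
  have hd := hu.differentiable two_ne_zero
  have u₁ := hasDerivAt_pd1 hd s t
  have u₂ := hasDerivAt_pd2 hd s t
  have us₁ := hasDerivAt_pd1 (differentiable_uncurry_pd1 hu) s t
  have us₂ := hasDerivAt_pd2 (differentiable_uncurry_pd1 hu) s t
  have ut₁ := hasDerivAt_pd1 (differentiable_uncurry_pd2 hu) s t
  have ut₂ := hasDerivAt_pd2 (differentiable_uncurry_pd2 hu) s t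
  have V₁ : HasDerivAt (fun x => Vpot θ x t) (-sin θ) s :=
    ((hasDerivAt_const s (t * cos θ)).fun_sub ((hasDerivAt_id' s).mul_const (sin θ))).congr_deriv
      (by ring)
  have V₂ : HasDerivAt (fun y => Vpot θ s y) (cos θ) t :=
    (((hasDerivAt_id' t).mul_const (cos θ)).fun_sub (hasDerivAt_const t (s * sin θ))).congr_deriv
      (by ring)
  have A₁ := (((ut₁.fun_pow 2).fun_sub (us₁.fun_pow 2)).fun_add
    ((V₁.fun_pow 2).fun_mul (u₁.fun_pow 2))).fun_sub ((u₁.fun_pow 2).const_mul σ)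
  have A₂ := (((us₂.fun_pow 2).fun_sub (ut₂.fun_pow 2)).fun_add
    ((V₂.fun_pow 2).fun_mul (u₂.fun_pow 2))).fun_sub ((u₂.fun_pow 2).const_mul σ)
  have h₁ : pd1 (virialFlux₁ θ σ u) s t = _ :=
    ((((hasDerivAt_id' s).fun_mul A₁).div_const 2).fun_sub
      (((hasDerivAt_const s t).fun_mul us₁).fun_mul ut₁)).deriv
  have h₂ : pd2 (virialFlux₂ θ σ u) s t = _ :=
    ((((hasDerivAt_id' t).fun_mul A₂).div_const 2).fun_sub
      (((hasDerivAt_const t s).fun_mul us₂).fun_mul ut₂)).deriv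
  rw [h₁, h₂]
  simp only [Hop, Vpot, pd1_pd2_comm hu]
  ring

end DivergenceIdentities

theorem intHalf_divergence_eq_zero {F G : ℝ → ℝ → ℝ} (hF : IsC1RapidDecay F)
    (hG : IsC1RapidDecay G) (hG_bdry : ∀ s, G s 0 = 0) :
    intHalf (fun s t => pd1 F s t + pd2 G s t) = 0 := by
  rw [intHalf_add hF.halfPlaneIntegrable_pd1 hG.halfPlaneIntegrable_pd2,
    intHalf_pd1_eq_zero (fun t s => (hasDerivAt_pd1 hF.differentiable s t).differentiableAt)
      hF.halfPlaneIntegrable hF.halfPlaneIntegrable_pd1,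
    intHalf_pd2_eq_zero (fun s t => (hasDerivAt_pd2 hG.differentiable s t).differentiableAt)
      hG.halfPlaneIntegrable hG.halfPlaneIntegrable_pd2 hG_bdry, add_zero]

namespace SchwartzHalf

variable {u : ℝ → ℝ → ℝ}

theorem isC1RapidDecay (hS : SchwartzHalf u) (hu : ContDiff ℝ 1 (uncurry u)) :
    IsC1RapidDecay u where
  contDiff := hu
  decay := hS.rapidDecay 0 0
  decay_pd1 := hS.rapidDecay 1 0
  decay_pd2 := hS.rapidDecay 0 1

theorem isC1RapidDecay_pd1 (hS : SchwartzHalf u) (hu : ContDiff ℝ 2 (uncurry u)) :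
    IsC1RapidDecay (pd1 u) where
  contDiff := contDiff_uncurry_pd1 hu (by norm_num)
  decay := hS.rapidDecay 1 0
  decay_pd1 := hS.rapidDecay 2 0
  -- `SchwartzHalf` only bounds the derivatives `∂_s^k ∂_t^l` taken in this order
  decay_pd2 := pd1_pd2_comm hu ▸ hS.rapidDecay 1 1

theorem isC1RapidDecay_pd2 (hS : SchwartzHalf u) (hu : ContDiff ℝ 2 (uncurry u)) :
    IsC1RapidDecay (pd2 u) where
  contDiff := contDiff_uncurry_pd2 hu (by norm_num)
  decay := hS.rapidDecay 0 1
  decay_pd1 := hS.rapidDecay 1 1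
  decay_pd2 := hS.rapidDecay 0 2

end SchwartzHalf

namespace IsC1RapidDecay

variable {u : ℝ → ℝ → ℝ}

theorem vpot_mul (hu : IsC1RapidDecay u) (θ : ℝ) :
    IsC1RapidDecay (fun s t => Vpot θ s t * u s t) := by
  convert hu.affine_mul (-sin θ) (cos θ) 0 using 1
  funext s t
  simp only [Vpot]
  ring

theorem vpot_sq_mul_sq (hu : IsC1RapidDecay u) (θ : ℝ) :
    IsC1RapidDecay (fun s t => (Vpot θ s t) ^ 2 * (u s t) ^ 2) := by
  convert (hu.vpot_mul θ).mul (hu.vpot_mul θ) using 1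
  funext s t
  ring

theorem virialFlux₁ (hu : IsC1RapidDecay u) (hu₁ : IsC1RapidDecay (pd1 u))
    (hu₂ : IsC1RapidDecay (pd2 u)) (θ σ : ℝ) : IsC1RapidDecay (virialFlux₁ θ σ u) := by
  have hA := (((hu₂.mul hu₂).add ((hu₁.mul hu₁).affine_mul 0 0 (-1))).add
    (hu.vpot_sq_mul_sq θ)).add ((hu.mul hu).affine_mul 0 0 (-σ))
  convert (hA.affine_mul (1 / 2) 0 0).add ((hu₁.mul hu₂).affine_mul 0 (-1) 0) using 1
  funext s t
  simp only [_root_.virialFlux₁]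
  ring

theorem virialFlux₂ (hu : IsC1RapidDecay u) (hu₁ : IsC1RapidDecay (pd1 u))
    (hu₂ : IsC1RapidDecay (pd2 u)) (θ σ : ℝ) : IsC1RapidDecay (virialFlux₂ θ σ u) := by
  have hA := (((hu₁.mul hu₁).add ((hu₂.mul hu₂).affine_mul 0 0 (-1))).add
    (hu.vpot_sq_mul_sq θ)).add ((hu.mul hu).affine_mul 0 0 (-σ))
  convert (hA.affine_mul 0 (1 / 2) 0).add ((hu₁.mul hu₂).affine_mul (-1) 0 0) using 1
  funext s t
  simp only [_root_.virialFlux₂]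
  ring

end IsC1RapidDecay

namespace IsModelEigen

variable {θ σ : ℝ} {u : ℝ → ℝ → ℝ}

theorem contDiff_two (hu : IsModelEigen θ u σ) : ContDiff ℝ 2 (uncurry u) := hu.smooth 2

theorem isC1RapidDecay (hu : IsModelEigen θ u σ) : IsC1RapidDecay u :=
  hu.schwartz.isC1RapidDecay (hu.contDiff_two.of_le one_le_two)

theorem isC1RapidDecay_pd1 (hu : IsModelEigen θ u σ) : IsC1RapidDecay (pd1 u) :=
  hu.schwartz.isC1RapidDecay_pd1 hu.contDiff_two

theorem isC1RapidDecay_pd2 (hu : IsModelEigen θ u σ) : IsC1RapidDecay (pd2 u) :=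
  hu.schwartz.isC1RapidDecay_pd2 hu.contDiff_two

theorem halfPlaneIntegrable_sq (hu : IsModelEigen θ u σ) :
    HalfPlaneIntegrable (fun s t => (u s t) ^ 2) := by
  simpa only [sq] using (hu.isC1RapidDecay.mul hu.isC1RapidDecay).halfPlaneIntegrable

theorem halfPlaneIntegrable_vpot_sq_mul_sq (hu : IsModelEigen θ u σ) :
    HalfPlaneIntegrable (fun s t => (Vpot θ s t) ^ 2 * (u s t) ^ 2) :=
  (hu.isC1RapidDecay.vpot_sq_mul_sq θ).halfPlaneIntegrable

theorem energy_identity (hu : IsModelEigen θ u σ) :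
    intHalf (fun s t => (pd1 u s t) ^ 2 + (pd2 u s t) ^ 2)
      + intHalf (fun s t => (Vpot θ s t) ^ 2 * (u s t) ^ 2) = σ := by
  have h_grad : HalfPlaneIntegrable (fun s t => (pd1 u s t) ^ 2 + (pd2 u s t) ^ 2) := by
    simpa only [sq] using ((hu.isC1RapidDecay_pd1.mul hu.isC1RapidDecay_pd1).add
      (hu.isC1RapidDecay_pd2.mul hu.isC1RapidDecay_pd2)).halfPlaneIntegrable
  have h_div := intHalf_divergence_eq_zero (hu.isC1RapidDecay.mul hu.isC1RapidDecay_pd1)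
    (hu.isC1RapidDecay.mul hu.isC1RapidDecay_pd2) (fun s => by simp only [hu.neumann, mul_zero])
  have h_pointwise (s t : ℝ) (ht : 0 < t) :
      pd1 (fun s t => u s t * pd1 u s t) s t + pd2 (fun s t => u s t * pd2 u s t) s t =
        ((pd1 u s t) ^ 2 + (pd2 u s t) ^ 2 + (Vpot θ s t) ^ 2 * (u s t) ^ 2)
          + (-σ) * (u s t) ^ 2 := by
    have h_eigen := hu.eigen s t ht.le
    simp only [Hop] at h_eigen
    rw [pd1_add_pd2_energyFlux hu.contDiff_two]
    linear_combination (-u s t) * h_eigen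
  rw [intHalf_congr h_pointwise,
    intHalf_add (h_grad.add hu.halfPlaneIntegrable_vpot_sq_mul_sq)
      (hu.halfPlaneIntegrable_sq.const_mul (-σ)),
    intHalf_add h_grad hu.halfPlaneIntegrable_vpot_sq_mul_sq, intHalf_const_mul,
    hu.normalized] at h_div
  linarith

theorem virial_identity (hu : IsModelEigen θ u σ) :
    2 * intHalf (fun s t => (Vpot θ s t) ^ 2 * (u s t) ^ 2) = σ := by
  have h_div := intHalf_divergence_eq_zero
    (hu.isC1RapidDecay.virialFlux₁ hu.isC1RapidDecay_pd1 hu.isC1RapidDecay_pd2 θ σ)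
    (hu.isC1RapidDecay.virialFlux₂ hu.isC1RapidDecay_pd1 hu.isC1RapidDecay_pd2 θ σ)
    (fun s => by simp only [virialFlux₂, hu.neumann]; ring)
  have h_pointwise (s t : ℝ) (ht : 0 < t) :
      pd1 (virialFlux₁ θ σ u) s t + pd2 (virialFlux₂ θ σ u) s t =
        2 * ((Vpot θ s t) ^ 2 * (u s t) ^ 2) + (-σ) * (u s t) ^ 2 := by
    rw [pd1_virialFlux₁_add_pd2_virialFlux₂ θ σ hu.contDiff_two, hu.eigen s t ht.le]
    ring
  rw [intHalf_congr h_pointwise,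
    intHalf_add (hu.halfPlaneIntegrable_vpot_sq_mul_sq.const_mul 2)
      (hu.halfPlaneIntegrable_sq.const_mul (-σ)),
    intHalf_const_mul, intHalf_const_mul, hu.normalized] at h_div
  linarith

end IsModelEigen

theorem virial_identities_general (θ : ℝ)
    (u : ℝ → ℝ → ℝ) (σ : ℝ) (hu : IsModelEigen θ u σ) :
    intHalf (fun s t => (pd1 u s t)^2 + (pd2 u s t)^2) = σ / 2 ∧
    intHalf (fun s t => (Vpot θ s t)^2 * (u s t)^2) = σ / 2 := by
  have h_energy := hu.energy_identity
  have h_virial := hu.virial_identity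
  constructor <;> linarith

/-- The Virial identities: `∫ (|∂_s u|² + |∂_t u|²) = ∫ V_θ² u² = σ/2`. -/
theorem virial_identities (θ : ℝ) (hθ : θ ∈ Set.Ioo 0 (π/2))
    (u : ℝ → ℝ → ℝ) (σ : ℝ) (hu : IsModelEigen θ u σ) :
    intHalf (fun s t => (pd1 u s t)^2 + (pd2 u s t)^2) = σ / 2 ∧
    intHalf (fun s t => (Vpot θ s t)^2 * (u s t)^2) = σ / 2 :=
  virial_identities_general θ u σ hu
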